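/- For every finite simple graph G and every subset A of its vertex set with both A and Aᶜ nonempty, the Schmidt rank of the graph state across the bipartition (A, Aᶜ) equals 2 raised to the cut-rank: χ_{A,Aᶜ}(|G⟩) = 2^{cutrk_G(A)}, where cutrk_G(A) is the rank over GF(2) of the A × Aᶜ adjacency submatrix of G. (Consequently, the Schmidt-rank width of a graph state equals the rank-width of the underlying graph.) -/

import Mathlib

open scoped BigOperators Classical

noncomputable section

/-- The number `q_G(x)` of edges `{a,b}` of `G` with `x a = x b = true`. -/
def qCount {V : Type} [Fintype V] [DecidableEq V] (G : SimpleGraph V)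
    (x : V → Bool) : ℕ :=
  (Finset.univ.filter fun e : Sym2 V => e ∈ G.edgeSet ∧ ∀ v ∈ e, x v = true).card

/-- The graph state of a finite simple graph `G` on the vertex set `V`:
`|G⟩(x) = 2^{−n/2} · (−1)^{q_G(x)}` where `n = |V|`. -/
def graphState {V : Type} [Fintype V] [DecidableEq V] (G : SimpleGraph V) :
    (V → Bool) → ℂ :=
  fun x => (1 / (Real.sqrt (2 ^ Fintype.card V) : ℂ)) * (-1) ^ qCount G x

/-- The Schmidt rank `χ_{A,Aᶜ}(ψ)` of a state across the bipartition `(A, Aᶜ)`: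
the rank over `ℂ` of the matrix indexed by `(u : A → Bool) × (v : Aᶜ → Bool)`
whose entries are the amplitudes of the strings agreeing with `u` on `A` and
with `v` on `Aᶜ`. -/
def schmidtRank {V : Type} [Fintype V] [DecidableEq V]
    (ψ : (V → Bool) → ℂ) (A : Set V) : ℕ :=
  Matrix.rank (Matrix.of fun (u : ↥A → Bool) (v : ↥Aᶜ → Bool) =>
    ψ fun i => if h : i ∈ A then u ⟨i, h⟩ else v ⟨i, h⟩)

/-- The cut-rank `cutrk_G(A)`: the rank over `GF(2)` of the `A × Aᶜ` adjacency
submatrix of `G`. -/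
def cutRank {V : Type} [Fintype V] (G : SimpleGraph V) (A : Set V) : ℕ :=
  Matrix.rank (Matrix.of fun (a : ↥A) (b : ↥Aᶜ) =>
    if G.Adj a.val b.val then (1 : ZMod 2) else 0)

namespace GraphStateAux

/-! ### Generic auxiliary lemmas -/

/-- sign character on `ZMod 2`. -/
def sgn (x : ZMod 2) : ℂ := if x = 0 then 1 else -1

lemma sgn_zero : sgn 0 = 1 := by simp [sgn]

lemma two_zmod : (1 + 1 : ZMod 2) = 0 := by decide

lemma sgn_add (x y : ZMod 2) : sgn (x + y) = sgn x * sgn y := by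
  rcases (show x = 0 ∨ x = 1 by revert x; decide) with rfl | rfl <;>
    rcases (show y = 0 ∨ y = 1 by revert y; decide) with rfl | rfl <;> norm_num [sgn, two_zmod] <;> decide

lemma sgn_natCast (n : ℕ) : ((-1 : ℂ)) ^ n = sgn (n : ZMod 2) := by
  induction n with
  | zero => simp [sgn]
  | succ k ih =>
      rw [pow_succ, ih, Nat.cast_add, Nat.cast_one, sgn_add]
      norm_num [sgn]

/-- `Bool ≃ ZMod 2`. -/
def e2 : Bool ≃ ZMod 2 where
  toFun b := if b then 1 else 0
  invFun z := decide (z = 1)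
  left_inv b := by cases b <;> simp
  right_inv z := by rcases (show z = 0 ∨ z = 1 by revert z; decide) with rfl | rfl <;> simp

lemma zmod_ne_zero {x : ZMod 2} (h : x ≠ 0) : x = 1 := by
  revert h
  have : ∀ y : ZMod 2, y ≠ 0 → y = 1 := by decide
  exact this x

lemma zmod_add_self (a : ZMod 2) : a + a = 0 := by
  revert a; decide

lemma zmod_add_eq_zero {a b : ZMod 2} (h : a ≠ b) : a + b ≠ 0 := by
  revert h; revert a b
  decide

/-- Character orthogonality: the sum of a nontrivial sign character over
`ι → ZMod 2` vanishes. -/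
lemma charSum {ι : Type} [Fintype ι] [DecidableEq ι] (w : ι → ZMod 2) (hw : w ≠ 0) :
    ∑ x : ι → ZMod 2, sgn (dotProduct w x) = 0 := by
  obtain ⟨b, hb⟩ : ∃ b, w b ≠ 0 := by
    by_contra h
    push_neg at h
    exact hw (funext h)
  have hwb : w b = 1 := zmod_ne_zero hb
  have h2 : ∀ x : ι → ZMod 2,
      sgn (dotProduct w (x + Pi.single b 1)) = - sgn (dotProduct w x) := by
    intro x
    rw [dotProduct_add, sgn_add]
    have : dotProduct w (Pi.single b (1 : ZMod 2)) = 1 := by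
      rw [dotProduct_single, mul_one, hwb]
    rw [this]
    norm_num [sgn]
  have h1 : ∑ x : ι → ZMod 2, sgn (dotProduct w x)
      = - ∑ x : ι → ZMod 2, sgn (dotProduct w x) := by
    conv_lhs => rw [← (Fintype.sum_equiv (Equiv.addRight (Pi.single b (1 : ZMod 2))) _
      (fun x => sgn (dotProduct w x)) (fun x => rfl))]
    simp_rw [Equiv.coe_addRight, h2]
    rw [Finset.sum_neg_distrib]
  exact CharZero.eq_neg_self_iff.mp h1

lemma single_injective (ι : Type) [DecidableEq ι] :
    Function.Injective (fun w : ι => Pi.single w (1 : ℂ)) := by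
  intro a b h
  by_contra hne
  have h1 : (Pi.single a (1 : ℂ) : ι → ℂ) a = 1 := by simp
  have h2 : (Pi.single b (1 : ℂ) : ι → ℂ) a = 0 := by
    rw [Pi.single_eq_of_ne hne]
  have h3 : (Pi.single a (1 : ℂ) : ι → ℂ) = Pi.single b (1 : ℂ) := h
  rw [h3] at h1
  rw [h1] at h2
  exact one_ne_zero h2

/-! ### Graph-specific definitions -/

variable {V : Type} [Fintype V] [DecidableEq V] (G : SimpleGraph V) (A : Set V)

def cmb (u : ↥A → Bool) (v : ↥Aᶜ → Bool) : V → Bool :=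
  fun i => if h : i ∈ A then u ⟨i, h⟩ else v ⟨i, h⟩

def BB : Matrix ↥A ↥Aᶜ (ZMod 2) :=
  Matrix.of fun a b => if G.Adj a.val b.val then (1 : ZMod 2) else 0

def ff (u : ↥A → Bool) : ↥Aᶜ → ZMod 2 :=
  Matrix.mulVec (Matrix.transpose (BB G A)) fun a => e2 (u a)

def cross (u : ↥A → Bool) (v : ↥Aᶜ → Bool) : ℕ :=
  (Finset.univ.filter fun p : ↥A × ↥Aᶜ =>
    G.Adj p.1.val p.2.val ∧ u p.1 = true ∧ v p.2 = true).card

lemma qCount_split (u : ↥A → Bool) (v : ↥Aᶜ → Bool) :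
    qCount G (cmb A u v) =
      qCount G (cmb A u fun _ => false) + qCount G (cmb A (fun _ => false) v)
        + cross G A u v := by
  classical
  set E : Finset (Sym2 V) :=
    Finset.univ.filter (fun e : Sym2 V => e ∈ G.edgeSet ∧ ∀ w ∈ e, cmb A u v w = true) with hE
  set p : Sym2 V → Prop := fun e => ∀ w ∈ e, w ∈ A with hp
  set q : Sym2 V → Prop := fun e => ∀ w ∈ e, w ∉ A with hq
  -- step 1
  have h1 : qCount G (cmb A u fun _ => false) = (E.filter p).card := by
    rw [qCount, hE, Finset.filter_filter]
    congr 1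
    ext e
    simp only [Finset.mem_filter, Finset.mem_univ, true_and]
    constructor
    · rintro ⟨he, hall⟩
      have hA : ∀ w ∈ e, w ∈ A := by
        intro w hw
        by_contra hnA
        have h := hall w hw
        rw [cmb, dif_neg hnA] at h
        exact Bool.false_ne_true h
      refine ⟨⟨he, ?_⟩, hA⟩
      intro w hw
      have h := hall w hw
      have hwA := hA w hw
      rw [cmb, dif_pos hwA] at h ⊢
      exact h
    · rintro ⟨⟨he, hall⟩, hA⟩
      refine ⟨he, ?_⟩
      intro w hw
      have h := hall w hw
      have hwA := hA w hw
      rw [cmb, dif_pos hwA] at h ⊢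
      exact h
  -- step 2
  have h2 : qCount G (cmb A (fun _ => false) v) = (E.filter q).card := by
    rw [qCount, hE, Finset.filter_filter]
    congr 1
    ext e
    simp only [Finset.mem_filter, Finset.mem_univ, true_and]
    constructor
    · rintro ⟨he, hall⟩
      have hA : ∀ w ∈ e, w ∉ A := by
        intro w hw
        by_contra hnA
        have h := hall w hw
        rw [cmb, dif_pos hnA] at h
        exact Bool.false_ne_true h
      refine ⟨⟨he, ?_⟩, hA⟩
      intro w hw
      have h := hall w hw
      have hwA := hA w hw
      rw [cmb, dif_neg hwA] at h ⊢
      exact h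
    · rintro ⟨⟨he, hall⟩, hA⟩
      refine ⟨he, ?_⟩
      intro w hw
      have h := hall w hw
      have hwA := hA w hw
      rw [cmb, dif_neg hwA] at h ⊢
      exact h
  -- step 3 : cross as filtered edges
  have h3 : cross G A u v = (E.filter fun e => ¬ p e ∧ ¬ q e).card := by
    rw [cross]
    refine Finset.card_bij (fun pr _ => s(pr.1.1, pr.2.1)) ?_ ?_ ?_
    · rintro ⟨a, b⟩ hab
      simp only [Finset.mem_filter, Finset.mem_univ, true_and] at hab
      obtain ⟨hadj, hu, hv⟩ := hab
      have hbA : b.1 ∉ A := b.2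
      simp only [Finset.mem_filter, Finset.mem_univ, true_and, hE, hp, hq]
      refine ⟨⟨(SimpleGraph.mem_edgeSet G).mpr hadj, ?_⟩, ?_, ?_⟩
      · intro w hw
        rcases Sym2.mem_iff.mp hw with rfl | rfl
        · rw [cmb, dif_pos a.2]; exact hu
        · rw [cmb, dif_neg hbA]; exact hv
      · intro hall
        exact hbA (hall b.1 (Sym2.mem_mk_right _ _))
      · intro hall
        exact hall a.1 (Sym2.mem_mk_left _ _) a.2
    · rintro ⟨a, b⟩ h1 ⟨a', b'⟩ h2 heq
      rcases Sym2.eq_iff.mp heq with ⟨hx, hy⟩ | ⟨hx, hy⟩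
      · exact Prod.ext (Subtype.ext hx) (Subtype.ext hy)
      · exact absurd (hx ▸ a.2) b'.2
    · intro e he
      induction e using Sym2.ind with
      | _ x y =>
        simp only [Finset.mem_filter, Finset.mem_univ, true_and, hE, hp, hq] at he
        obtain ⟨⟨he1, hall⟩, hnp, hnq⟩ := he
        by_cases hx : x ∈ A
        · have hy : y ∉ A := by
            intro hy
            exact hnp (fun w hw => by rcases Sym2.mem_iff.mp hw with rfl | rfl <;> assumption)
          have hu : u ⟨x, hx⟩ = true := by
            have h := hall x (Sym2.mem_mk_left _ _); rwa [cmb, dif_pos hx] at h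
          have hv : v ⟨y, hy⟩ = true := by
            have h := hall y (Sym2.mem_mk_right _ _); rwa [cmb, dif_neg hy] at h
          refine ⟨(⟨x, hx⟩, ⟨y, hy⟩), ?_, rfl⟩
          simp only [Finset.mem_filter, Finset.mem_univ, true_and]
          exact ⟨(SimpleGraph.mem_edgeSet G).mp he1, hu, hv⟩
        · have hy : y ∈ A := by
            by_contra hy
            exact hnq (fun w hw => by rcases Sym2.mem_iff.mp hw with rfl | rfl <;> assumption)
          have hu : u ⟨y, hy⟩ = true := by
            have h := hall y (Sym2.mem_mk_right _ _); rwa [cmb, dif_pos hy] at h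
          have hv : v ⟨x, hx⟩ = true := by
            have h := hall x (Sym2.mem_mk_left _ _); rwa [cmb, dif_neg hx] at h
          refine ⟨(⟨y, hy⟩, ⟨x, hx⟩), ?_, Sym2.eq_swap⟩
          simp only [Finset.mem_filter, Finset.mem_univ, true_and]
          exact ⟨((SimpleGraph.mem_edgeSet G).mp he1).symm, hu, hv⟩
  -- partition
  have key : ∀ e : Sym2 V, q e → ¬ p e := by
    intro e
    induction e using Sym2.ind with
    | _ x y => exact fun hq' hp' => hq' x (Sym2.mem_mk_left _ _) (hp' x (Sym2.mem_mk_left _ _))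
  have hpart1 : (E.filter p).card + (E.filter fun e => ¬ p e).card = E.card :=
    Finset.card_filter_add_card_filter_not p
  have hpart2 : ((E.filter fun e => ¬ p e).filter q).card
      + ((E.filter fun e => ¬ p e).filter fun e => ¬ q e).card
      = (E.filter fun e => ¬ p e).card :=
    Finset.card_filter_add_card_filter_not q
  have hq1 : (E.filter fun e => ¬ p e).filter q = E.filter q := by
    rw [Finset.filter_filter]
    apply Finset.filter_congr
    intro e _
    constructor
    · rintro ⟨_, h⟩; exact h
    · intro h; exact ⟨key e h, h⟩
  have hq2 : (E.filter fun e => ¬ p e).filter (fun e => ¬ q e)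
      = E.filter fun e => ¬ p e ∧ ¬ q e := Finset.filter_filter _ _ _
  have hqc : qCount G (cmb A u v) = E.card := rfl
  rw [hqc, ← hpart1, ← hpart2, hq1, hq2, h1, h2, h3]
  ring

lemma cross_cast (u : ↥A → Bool) (v : ↥Aᶜ → Bool) :
    ((cross G A u v : ℕ) : ZMod 2) = dotProduct (ff G A u) (fun b => e2 (v b)) := by
  classical
  rw [cross, Finset.natCast_card_filter]
  rw [dotProduct]
  simp only [ff, Matrix.mulVec, dotProduct, Matrix.transpose_apply, Finset.sum_mul]
  rw [Fintype.sum_prod_type]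
  rw [Finset.sum_comm]
  refine Finset.sum_congr rfl fun b _ => Finset.sum_congr rfl fun a _ => ?_
  by_cases hadj : G.Adj a.val b.val <;> cases hu : u a <;> cases hv : v b <;>
    simp [BB, e2, hadj, hu, hv]

/-! ### The three matrices -/

def dK : Matrix (↥Aᶜ → Bool) (↥Aᶜ → Bool) ℂ :=
  Matrix.of fun w v => sgn (dotProduct (fun b => e2 (w b)) (fun b => e2 (v b)))

def fb (u : ↥A → Bool) : ↥Aᶜ → Bool := fun b => e2.symm (ff G A u b)

def dS : Matrix (↥A → Bool) (↥Aᶜ → Bool) ℂ :=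
  Matrix.of fun u w => if fb G A u = w then 1 else 0

lemma e2_fb (u : ↥A → Bool) : (fun b => e2 (fb G A u b)) = ff G A u :=
  funext fun b => e2.apply_symm_apply _

lemma SK_apply (u : ↥A → Bool) (v : ↥Aᶜ → Bool) :
    (dS G A * dK A) u v = sgn (dotProduct (ff G A u) (fun b => e2 (v b))) := by
  classical
  rw [Matrix.mul_apply]
  have : ∀ w, dS G A u w * dK A w v = if fb G A u = w then dK A w v else 0 := by
    intro w
    simp only [dS, Matrix.of_apply, ite_mul, one_mul, zero_mul]
  simp_rw [this]
  rw [Finset.sum_ite_eq, if_pos (Finset.mem_univ _)]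
  have hgoal : dK A (fb G A u) v
      = sgn (dotProduct (ff G A u) fun b => e2 (v b)) := by
    rw [dK]
    show sgn (dotProduct (fun b => e2 (fb G A u b)) fun b => e2 (v b)) = _
    rw [e2_fb]
  exact hgoal

lemma KK : dK A * dK A
    = ((Fintype.card (↥Aᶜ → Bool) : ℂ)) • (1 : Matrix (↥Aᶜ → Bool) (↥Aᶜ → Bool) ℂ) := by
  classical
  ext w w'
  rw [Matrix.mul_apply]
  have hterm : ∀ v, dK A w v * dK A v w'
      = sgn (dotProduct ((fun b => e2 (w b)) + fun b => e2 (w' b)) (fun b => e2 (v b))) := by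
    intro v
    simp only [dK, Matrix.of_apply]
    rw [dotProduct_comm (fun b => e2 (v b)) (fun b => e2 (w' b))]
    rw [add_dotProduct, sgn_add]
  simp_rw [hterm]
  have hsum : ∑ v : ↥Aᶜ → Bool,
      sgn (dotProduct ((fun b => e2 (w b)) + fun b => e2 (w' b)) (fun b => e2 (v b)))
      = ∑ x : ↥Aᶜ → ZMod 2,
        sgn (dotProduct ((fun b => e2 (w b)) + fun b => e2 (w' b)) x) :=
    Equiv.sum_comp (Equiv.piCongrRight fun _ => e2)
      (fun x => sgn (dotProduct ((fun b => e2 (w b)) + fun b => e2 (w' b)) x))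
  rw [hsum]
  by_cases hww : w = w'
  · subst hww
    have hz : ((fun b => e2 (w b)) + fun b => e2 (w b)) = (0 : ↥Aᶜ → ZMod 2) :=
      funext fun b => zmod_add_self _
    rw [hz]
    simp only [zero_dotProduct, sgn_zero, Finset.sum_const, Finset.card_univ, nsmul_eq_mul,
      mul_one, Matrix.smul_apply, Matrix.one_apply_eq, smul_eq_mul]
    rw [Fintype.card_congr (Equiv.piCongrRight fun _ : ↥Aᶜ => e2)]
  · have hz : ((fun b => e2 (w b)) + fun b => e2 (w' b)) ≠ (0 : ↥Aᶜ → ZMod 2) := by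
      intro h0
      obtain ⟨b, hb⟩ : ∃ b, w b ≠ w' b := by
        by_contra hc
        push_neg at hc
        exact hww (funext hc)
      have hb2 : e2 (w b) ≠ e2 (w' b) := fun hh => hb (e2.injective hh)
      have := congrFun h0 b
      simp only [Pi.add_apply, Pi.zero_apply] at this
      exact zmod_add_eq_zero hb2 this
    rw [charSum _ hz]
    simp only [Matrix.smul_apply, Matrix.one_apply_ne hww, smul_eq_mul, mul_zero]

lemma det_dK_ne_zero : (dK A).det ≠ 0 := by
  classical
  intro h0
  have h := congrArg Matrix.det (KK A)
  rw [Matrix.det_mul, h0, mul_zero] at h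
  rw [Matrix.det_smul, Matrix.det_one, mul_one] at h
  have : ((Fintype.card (↥Aᶜ → Bool) : ℂ)) ^ Fintype.card (↥Aᶜ → Bool) ≠ 0 := by
    apply pow_ne_zero
    exact_mod_cast Fintype.card_ne_zero
  exact this h.symm

/-! ### Rank of `dS` -/

lemma range_dS : Set.range (dS G A) = (fun w => Pi.single w (1 : ℂ)) '' Set.range (fb G A) := by
  classical
  have hrow : ∀ u, dS G A u = Pi.single (fb G A u) (1 : ℂ) := by
    intro u
    funext w
    simp only [dS, Matrix.of_apply]
    rw [Pi.single_apply]
    by_cases h : fb G A u = w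
    · rw [if_pos h, if_pos h.symm]
    · rw [if_neg h, if_neg (Ne.symm h)]
  have : (dS G A : (↥A → Bool) → (↥Aᶜ → Bool) → ℂ)
      = (fun w => Pi.single w (1 : ℂ)) ∘ fb G A := funext hrow
  rw [show Set.range (dS G A) = Set.range ((fun w => Pi.single w (1 : ℂ)) ∘ fb G A) by rw [← this],
    Set.range_comp]

lemma rank_dS : (dS G A).rank = (Set.range (fb G A)).toFinset.card := by
  classical
  rw [Matrix.rank_eq_finrank_span_row]
  show Module.finrank ℂ (Submodule.span ℂ (Set.range (dS G A))) = _
  rw [range_dS]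
  have hli : LinearIndependent ℂ
      ((↑) : ((fun w => Pi.single w (1 : ℂ)) '' Set.range (fb G A)) → ((↥Aᶜ → Bool) → ℂ)) := by
    have h0 := (Pi.basisFun ℂ (↥Aᶜ → Bool)).linearIndependent
    have h1 : LinearIndependent ℂ (fun w : (↥Aᶜ → Bool) => Pi.single w (1 : ℂ)) := by
      have : (fun w : (↥Aᶜ → Bool) => Pi.single w (1 : ℂ))
          = fun w => Pi.basisFun ℂ (↥Aᶜ → Bool) w := by
        funext w
        rw [Pi.basisFun_apply]
      rw [this]
      exact h0
    have h2 := (linearIndepOn_id_range_iff (single_injective _)).mpr h1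
    exact h2.mono (Set.image_subset_range _ _)
  rw [finrank_span_set_eq_card hli]
  rw [Set.toFinset_image]
  exact Finset.card_image_of_injective _ (single_injective _)

lemma card_range_fb : (Set.range (fb G A)).toFinset.card = 2 ^ cutRank G A := by
  classical
  -- range fb = image of range ff under an injection
  have h1 : Set.range (fb G A)
      = (fun (g : ↥Aᶜ → ZMod 2) (b : ↥Aᶜ) => e2.symm (g b)) '' Set.range (ff G A) := by
    have : fb G A = (fun (g : ↥Aᶜ → ZMod 2) (b : ↥Aᶜ) => e2.symm (g b)) ∘ ff G A := rfl
    rw [this, Set.range_comp]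
  have hinj : Function.Injective (fun (g : ↥Aᶜ → ZMod 2) (b : ↥Aᶜ) => e2.symm (g b)) := by
    intro g g' h
    funext b
    have := congrFun h b
    exact e2.symm.injective this
  have hsurj : Function.Surjective (fun (u : ↥A → Bool) (a : ↥A) => e2 (u a)) :=
    (Equiv.piCongrRight fun _ : ↥A => e2).surjective
  have h2 : Set.range (ff G A)
      = ↑(LinearMap.range (Matrix.mulVecLin (Matrix.transpose (BB G A)))) := by
    ext z
    constructor
    · rintro ⟨u, rfl⟩
      exact LinearMap.mem_range.mpr ⟨fun a => e2 (u a), Matrix.mulVecLin_apply _ _⟩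
    · intro hz
      obtain ⟨y, hy⟩ := LinearMap.mem_range.mp hz
      obtain ⟨u, rfl⟩ := hsurj y
      exact ⟨u, by rw [← hy, Matrix.mulVecLin_apply]; rfl⟩
  rw [← Set.ncard_eq_toFinset_card', h1, Set.ncard_image_of_injective _ hinj, h2]
  have hcard : (↑(LinearMap.range (Matrix.mulVecLin (Matrix.transpose (BB G A)))) : Set (↥Aᶜ → ZMod 2)).ncard
      = Fintype.card ↥(LinearMap.range (Matrix.mulVecLin (Matrix.transpose (BB G A)))) := by
    rw [← Nat.card_coe_set_eq, Nat.card_eq_fintype_card]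
    exact Fintype.card_congr (Equiv.refl _)
  rw [hcard]
  rw [Module.card_eq_pow_finrank (K := ZMod 2), ZMod.card]
  congr 1
  have : Module.finrank (ZMod 2)
      ↥(LinearMap.range (Matrix.mulVecLin (Matrix.transpose (BB G A))))
      = (Matrix.transpose (BB G A)).rank := rfl
  rw [this, Matrix.rank_transpose]
  rfl

end GraphStateAux

open GraphStateAux

/-- For every finite simple graph `G` and every subset `A` of its vertex set with
`A` and `Aᶜ` nonempty, the Schmidt rank of the graph state across the bipartition
`(A, Aᶜ)` equals `2` raised to the cut-rank: `χ_{A,Aᶜ}(|G⟩) = 2^{cutrk_G(A)}`. -/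
theorem schmidtRank_graphState_eq_two_pow_cutRank {V : Type} [Fintype V]
    [DecidableEq V] (G : SimpleGraph V) (A : Set V)
    (hA : A.Nonempty) (hAc : Aᶜ.Nonempty) :
    schmidtRank (graphState G) A = 2 ^ cutRank G A := by
  classical
  set c : ℂ := 1 / (Real.sqrt (2 ^ Fintype.card V) : ℂ) with hc
  have hcne : c ≠ 0 := by
    rw [hc]
    apply one_div_ne_zero
    rw [Complex.ofReal_ne_zero]
    apply Real.sqrt_ne_zero'.mpr
    positivity
  set d1 : (↥A → Bool) → ℂ := fun u => c * (-1) ^ qCount G (cmb A u fun _ => false) with hd1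
  set d2 : (↥Aᶜ → Bool) → ℂ := fun v => (-1 : ℂ) ^ qCount G (cmb A (fun _ => false) v) with hd2
  have hd1ne : ∀ u, d1 u ≠ 0 := fun u =>
    mul_ne_zero hcne (pow_ne_zero _ (neg_ne_zero.mpr one_ne_zero))
  have hd2ne : ∀ v, d2 v ≠ 0 := fun v => pow_ne_zero _ (neg_ne_zero.mpr one_ne_zero)
  have hM : (Matrix.of fun (u : ↥A → Bool) (v : ↥Aᶜ → Bool) =>
      graphState G fun i => if h : i ∈ A then u ⟨i, h⟩ else v ⟨i, h⟩)
      = Matrix.diagonal d1 * (dS G A * dK A) * Matrix.diagonal d2 := by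
    ext u v
    rw [Matrix.mul_diagonal, Matrix.diagonal_mul, Matrix.of_apply]
    have hx : (fun i => if h : i ∈ A then u ⟨i, h⟩ else v ⟨i, h⟩) = cmb A u v := rfl
    rw [hx, graphState, qCount_split G A u v, SK_apply]
    rw [← cross_cast G A u v, ← sgn_natCast]
    simp only [hd1, hd2]
    rw [pow_add, pow_add]
    ring
  rw [schmidtRank, hM]
  rw [Matrix.rank_mul_eq_left_of_isUnit_det _ _ ?hdet2]
  case hdet2 =>
    rw [Matrix.det_diagonal]
    exact isUnit_iff_ne_zero.mpr (Finset.prod_ne_zero_iff.mpr fun v _ => hd2ne v)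
  rw [Matrix.rank_mul_eq_right_of_isUnit_det _ _ ?hdet1]
  case hdet1 =>
    rw [Matrix.det_diagonal]
    exact isUnit_iff_ne_zero.mpr (Finset.prod_ne_zero_iff.mpr fun u _ => hd1ne u)
  rw [Matrix.rank_mul_eq_left_of_isUnit_det _ _ (isUnit_iff_ne_zero.mpr (det_dK_ne_zero A))]
  rw [rank_dS, card_range_fb]
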